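/- Define in the free associative algebra NSym on generators h_1, h_2, …, for each n ≥ 1, ψ_n = ∑_{β ⊨ n} (−1)^{1+ℓ(β)} β_{ℓ(β)} h_β, where β_{ℓ(β)} is the last part of β. Then for every n ≥ 1: ∑_{i=0}^{n−1} h_i ψ_{n−i} = n · h_n (with h_0 = 1). -/

import Mathlib

def IsComposition (n : ℕ) (l : List ℕ) : Prop := (∀ x ∈ l, 0 < x) ∧ l.sum = n

def cset (l : List ℕ) : Finset ℕ :=
  (Finset.range (l.length - 1)).image (fun i => (l.take (i+1)).sum)


noncomputable def comps (n : ℕ) : Finset (List ℕ) :=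
  (Finset.univ : Finset (Composition n)).image Composition.blocks

noncomputable def h (k : ℕ) : FreeAlgebra ℚ ℕ := if k = 0 then 1 else FreeAlgebra.ι ℚ k

noncomputable def hC (β : List ℕ) : FreeAlgebra ℚ ℕ := (β.map h).prod


noncomputable def psi (k : ℕ) : FreeAlgebra ℚ ℕ :=
  ∑ β ∈ comps k, (((-1 : ℚ) ^ (1 + β.length)) * (β.getLastD 0 : ℚ)) • hC β

lemma mem_comps {k : ℕ} {l : List ℕ} :
    l ∈ comps k ↔ (∀ x ∈ l, 0 < x) ∧ l.sum = k := by
  simp only [comps, Finset.mem_image, Finset.mem_univ, true_and]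
  constructor
  · rintro ⟨c, rfl⟩
    exact ⟨fun x hx => c.blocks_pos hx, c.blocks_sum⟩
  · rintro ⟨h1, h2⟩
    exact ⟨⟨l, fun hi => h1 _ hi, h2⟩, rfl⟩

lemma hC_cons (i : ℕ) (β : List ℕ) : hC (i :: β) = h i * hC β := by
  simp [hC]

lemma comps_ne_nil {k : ℕ} (hk : 1 ≤ k) {l : List ℕ} (hl : l ∈ comps k) : l ≠ [] := by
  rintro rfl
  rw [mem_comps] at hl
  simp at hl
  omega

lemma getLastD_indep {l : List ℕ} (hl : l ≠ []) (a b : ℕ) :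
    l.getLastD a = l.getLastD b := by
  cases l with
  | nil => simp at hl
  | cons x t => simp only [List.getLastD_cons]

/-- ∑_{i=0}^{n−1} h_i ψ_{n−i} = n h_n. -/
theorem stmt7 (n : ℕ) (hn : 1 ≤ n) :
    ∑ i ∈ Finset.range n, h i * psi (n - i) = (n : ℚ) • h n := by
  have h0 : h 0 = 1 := by simp [h]
  rw [Finset.range_eq_Ico, Finset.sum_eq_sum_Ico_succ_bot hn]
  rw [h0, one_mul, Nat.sub_zero]
  -- rewrite the tail sum as a sum over compositions of n of length ≥ 2
  have key : ∑ i ∈ Finset.Ico 1 n, h i * psi (n - i)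
      = ∑ γ ∈ (comps n).filter (fun γ => 2 ≤ γ.length),
          (-((((-1 : ℚ) ^ (1 + γ.length)) * (γ.getLastD 0 : ℚ)))) • hC γ := by
    simp_rw [psi, Finset.mul_sum, mul_smul_comm]
    rw [Finset.sum_sigma']
    refine Finset.sum_nbij' (fun x => x.1 :: x.2) (fun γ => ⟨γ.headI, γ.tail⟩) ?_ ?_ ?_ ?_ ?_
    · rintro ⟨i, β⟩ hx
      dsimp only at hx ⊢
      rw [Finset.mem_sigma, Finset.mem_Ico] at hx
      dsimp only at hx
      obtain ⟨⟨hi1, hi2⟩, hβ⟩ := hx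
      have hβne : β ≠ [] := comps_ne_nil (by omega) hβ
      rw [mem_comps] at hβ
      rw [Finset.mem_filter, mem_comps]
      refine ⟨⟨?_, ?_⟩, ?_⟩
      · intro x hx
        rcases List.mem_cons.1 hx with rfl | hx
        · omega
        · exact hβ.1 x hx
      · have hs := hβ.2
        simp only [List.sum_cons, hs]
        omega
      · have := List.length_pos_iff.2 hβne
        simp only [List.length_cons]
        omega
    · intro γ hγ
      rw [Finset.mem_filter] at hγ
      obtain ⟨hγc, hlen⟩ := hγ
      rw [mem_comps] at hγc
      obtain ⟨a, t, rfl⟩ : ∃ a t, γ = a :: t := by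
        cases γ with
        | nil => simp at hlen
        | cons a t => exact ⟨a, t, rfl⟩
      have ht : t ≠ [] := by
        cases t with
        | nil => simp at hlen
        | cons b s => simp
      have hts : 1 ≤ t.sum := by
        cases t with
        | nil => simp at ht
        | cons b s =>
          have := hγc.1 b (by simp)
          simp only [List.sum_cons]
          omega
      have hsum : a + t.sum = n := by simpa using hγc.2
      rw [Finset.mem_sigma, Finset.mem_Ico]
      simp only [List.headI_cons, List.tail_cons]
      constructor
      · exact ⟨hγc.1 a (by simp), by omega⟩
      · rw [mem_comps]
        exact ⟨fun x hx => hγc.1 x (by simp [hx]), by omega⟩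
    · rintro ⟨i, β⟩ hx
      simp
    · intro γ hγ
      rw [Finset.mem_filter] at hγ
      cases γ with
      | nil => simp at hγ
      | cons a t => simp
    · rintro ⟨i, β⟩ hx
      dsimp only at hx ⊢
      rw [Finset.mem_sigma, Finset.mem_Ico] at hx
      dsimp only at hx
      obtain ⟨⟨hi1, hi2⟩, hβ⟩ := hx
      have hβne : β ≠ [] := comps_ne_nil (by omega) hβ
      have hlast : (i :: β).getLastD 0 = β.getLastD 0 := by
        rw [List.getLastD_cons]
        exact getLastD_indep hβne i 0
      rw [hC_cons, hlast]
      congr 1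
      simp only [List.length_cons]
      ring
  rw [key]
  have split : psi n = (∑ γ ∈ (comps n).filter (fun γ => 2 ≤ γ.length),
      (((-1 : ℚ) ^ (1 + γ.length)) * (γ.getLastD 0 : ℚ)) • hC γ)
      + ∑ γ ∈ (comps n).filter (fun γ => ¬ 2 ≤ γ.length),
      (((-1 : ℚ) ^ (1 + γ.length)) * (γ.getLastD 0 : ℚ)) • hC γ := by
    rw [psi, Finset.sum_filter_add_sum_filter_not]
  have hone : (comps n).filter (fun γ => ¬ 2 ≤ γ.length) = {[n]} := by
    ext γ
    simp only [Finset.mem_filter, mem_comps, Finset.mem_singleton]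
    constructor
    · rintro ⟨⟨hpos, hsum⟩, hlen⟩
      cases γ with
      | nil => simp at hsum; omega
      | cons a t =>
        cases t with
        | nil => simp at hsum; simp [hsum]
        | cons b s => simp at hlen
    · rintro rfl
      refine ⟨⟨?_, by simp⟩, by simp⟩
      intro x hx
      simp at hx
      omega
  rw [split, hone]
  have hS : ∑ γ ∈ (comps n).filter (fun γ => 2 ≤ γ.length),
      (-((((-1 : ℚ) ^ (1 + γ.length)) * (γ.getLastD 0 : ℚ)))) • hC γ
      = -∑ γ ∈ (comps n).filter (fun γ => 2 ≤ γ.length),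
        ((((-1 : ℚ) ^ (1 + γ.length)) * (γ.getLastD 0 : ℚ))) • hC γ := by
    rw [← Finset.sum_neg_distrib]
    simp [neg_smul]
  rw [hS]
  have hsingle : (((-1 : ℚ) ^ (1 + ([n] : List ℕ).length)) * ((([n] : List ℕ).getLastD 0 : ℕ) : ℚ)) • hC [n]
      = (n : ℚ) • h n := by
    simp [hC]
  rw [Finset.sum_singleton, hsingle]
  abel
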